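/- arXiv:2508.08324 — 6 statements merged into one kernel-verified Lean document; each statement's English description precedes it below -/
import Mathlib

section
/- For two finite partitions π₁ and π₂ of a finite set S of size n, the quantity ε_n(π₁,π₂) = 2 − n⁻¹[Σⱼ maxₗ |S₁ⱼ ∩ S₂ₗ| + Σₗ maxⱼ |S₁ⱼ ∩ S₂ₗ|] equals 0 if and only if π₁ = π₂ (as unordered partitions). -/
open Finset

variable {α : Type*} [DecidableEq α]

/-- `P` is a partition of the finite set `S`: blocks are nonempty, pairwise
disjoint, and their union is `S`. -/
def IsPartitionOf (S : Finset α) (P : Finset (Finset α)) : Prop :=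
  (∀ B ∈ P, B.Nonempty) ∧ (P : Set (Finset α)).PairwiseDisjoint id ∧ P.sup id = S

/-- `Σ_{B ∈ P} max_{C ∈ Q} |B ∩ C|`. -/
def matchSum (P Q : Finset (Finset α)) : ℕ :=
  ∑ B ∈ P, Q.sup (fun C => (B ∩ C).card)

/-- The partition distance `ε_n`. -/
noncomputable def epsN (n : ℕ) (P Q : Finset (Finset α)) : ℝ :=
  2 - (n : ℝ)⁻¹ * ((matchSum P Q : ℝ) + (matchSum Q P : ℝ))

lemma sum_card_of_partition {S : Finset α} {P : Finset (Finset α)}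
    (hP : IsPartitionOf S P) : ∑ B ∈ P, B.card = S.card := by
  obtain ⟨-, hd, hsup⟩ := hP
  rw [← hsup, Finset.sup_eq_biUnion,
    Finset.card_biUnion (fun x hx y hy hxy => hd hx hy hxy)]
  rfl

lemma matchSum_le {S : Finset α} {P Q : Finset (Finset α)}
    (hP : IsPartitionOf S P) : matchSum P Q ≤ S.card := by
  rw [← sum_card_of_partition hP]
  refine Finset.sum_le_sum fun B _ => Finset.sup_le fun C _ =>
    Finset.card_le_card (Finset.inter_subset_left)

lemma partition_nonempty {S : Finset α} {P : Finset (Finset α)}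
    (hP : IsPartitionOf S P) (hS : S.Nonempty) : P.Nonempty := by
  rcases Finset.eq_empty_or_nonempty P with h | h
  · exfalso
    have := hP.2.2
    rw [h] at this
    simp at this
    rw [← this] at hS
    exact Finset.not_nonempty_empty hS
  · exact h

/-- If `matchSum P Q = |S|`, every block of `P` is contained in a block of `Q`. -/
lemma refines_of_matchSum_eq {S : Finset α} {P Q : Finset (Finset α)}
    (hP : IsPartitionOf S P) (hQne : Q.Nonempty)
    (h : matchSum P Q = S.card) : ∀ B ∈ P, ∃ C ∈ Q, B ⊆ C := by
  intro B hB
  rw [← sum_card_of_partition hP] at h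
  have hle : ∀ B ∈ P, Q.sup (fun C => (B ∩ C).card) ≤ B.card := fun B _ =>
    Finset.sup_le fun C _ => Finset.card_le_card (Finset.inter_subset_left)
  have heq : Q.sup (fun C => (B ∩ C).card) = B.card :=
    (Finset.sum_eq_sum_iff_of_le hle).mp h B hB
  obtain ⟨C, hC, hCmax⟩ := Finset.exists_mem_eq_sup Q hQne (fun C => (B ∩ C).card)
  refine ⟨C, hC, ?_⟩
  have : B ∩ C = B := Finset.eq_of_subset_of_card_le Finset.inter_subset_left
    (by rw [← hCmax, heq])
  rw [← this]
  exact Finset.inter_subset_right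

lemma eq_of_refines {S : Finset α} {P Q : Finset (Finset α)}
    (hP : IsPartitionOf S P) (hQ : IsPartitionOf S Q)
    (h1 : ∀ B ∈ P, ∃ C ∈ Q, B ⊆ C) (h2 : ∀ C ∈ Q, ∃ B ∈ P, C ⊆ B) : P ⊆ Q := by
  intro B hB
  obtain ⟨C, hC, hBC⟩ := h1 B hB
  obtain ⟨B', hB', hCB'⟩ := h2 C hC
  have hBne := hP.1 B hB
  have hBB' : B = B' := by
    by_contra hne
    have := hP.2.1 hB hB' hne
    exact hBne.ne_empty
      ((Finset.disjoint_self_iff_empty B).mp (this.mono_right (hBC.trans hCB')))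
  have : B = C := Finset.Subset.antisymm hBC (hBB' ▸ hCB')
  rwa [this]

lemma matchSum_self {S : Finset α} {P : Finset (Finset α)}
    (hP : IsPartitionOf S P) : matchSum P P = S.card := by
  rw [← sum_card_of_partition hP]
  refine Finset.sum_congr rfl fun B hB => le_antisymm
    (Finset.sup_le fun C _ => Finset.card_le_card Finset.inter_subset_left) ?_
  have := Finset.le_sup (f := fun C => (B ∩ C).card) hB
  simpa using this

/-- `ε_n(π₁,π₂) = 0` iff `π₁ = π₂` as unordered partitions. -/
theorem epsN_eq_zero_iff (S : Finset α) (n : ℕ) (hn : 1 ≤ n) (hS : S.card = n)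
    (P Q : Finset (Finset α)) (hP : IsPartitionOf S P) (hQ : IsPartitionOf S Q) :
    epsN n P Q = 0 ↔ P = Q := by
  have hn0 : (n : ℝ) ≠ 0 := Nat.cast_ne_zero.mpr (by omega)
  have key : epsN n P Q = 0 ↔ matchSum P Q + matchSum Q P = 2 * n := by
    unfold epsN
    rw [sub_eq_zero]
    constructor
    · intro h
      have : (2 : ℝ) * n = ((matchSum P Q : ℝ) + (matchSum Q P : ℝ)) := by
        field_simp at h ⊢
        linarith [h]
      exact_mod_cast this.symm
    · intro h
      have : ((matchSum P Q : ℝ) + (matchSum Q P : ℝ)) = 2 * n := by exact_mod_cast h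
      rw [this]
      field_simp
  rw [key]
  have h1 := matchSum_le (Q := Q) hP
  have h2 := matchSum_le (Q := P) hQ
  rw [hS] at h1 h2
  constructor
  · intro h
    have hm1 : matchSum P Q = n := by omega
    have hm2 : matchSum Q P = n := by omega
    rw [← hS] at hm1 hm2
    have hSne : S.Nonempty := Finset.card_pos.mp (by omega)
    have r1 := refines_of_matchSum_eq hP (partition_nonempty hQ hSne) hm1
    have r2 := refines_of_matchSum_eq hQ (partition_nonempty hP hSne) hm2
    exact Finset.Subset.antisymm (eq_of_refines hP hQ r1 r2) (eq_of_refines hQ hP r2 r1)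
  · rintro rfl
    have := matchSum_self hP
    rw [hS] at this
    omega
end

section
/- The partition distance ε_n satisfies the triangle inequality: for any three finite partitions π₁, π₂, π₃ of a finite set S of size n, ε_n(π₁,π₃) ≤ ε_n(π₁,π₂) + ε_n(π₂,π₃), where ε_n(π₁,π₂) = 2 − n⁻¹[Σⱼ maxₗ |S₁ⱼ ∩ S₂ₗ| + Σₗ maxⱼ |S₁ⱼ ∩ S₂ₗ|]. -/
open Finset

variable {α : Type*} [DecidableEq α]

lemma sum_inter_card_of_partition {S : Finset α} {Q : Finset (Finset α)}
    (hQ : IsPartitionOf S Q) {X : Finset α} (hX : X ⊆ S) :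
    ∑ B ∈ Q, (X ∩ B).card = X.card := by
  obtain ⟨-, hdisj, hsup⟩ := hQ
  have hd : ∀ B₁ ∈ Q, ∀ B₂ ∈ Q, B₁ ≠ B₂ → Disjoint (X ∩ B₁) (X ∩ B₂) := by
    intro B₁ h1 B₂ h2 hne
    exact (hdisj h1 h2 hne).mono inter_subset_right inter_subset_right
  rw [← Finset.card_biUnion hd]
  congr 1
  ext a
  simp only [Finset.mem_biUnion, Finset.mem_inter]
  constructor
  · rintro ⟨B, hB, ha, _⟩; exact ha
  · intro ha
    have haS : a ∈ S := hX ha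
    rw [← hsup, Finset.mem_sup] at haS
    obtain ⟨B, hB, haB⟩ := haS
    exact ⟨B, hB, ha, haB⟩

lemma matchSum_triangle {S : Finset α} {P Q R : Finset (Finset α)}
    (hP : IsPartitionOf S P) (hQ : IsPartitionOf S Q) (hR : IsPartitionOf S R)
    (hQne : Q.Nonempty) (hRne : R.Nonempty) :
    matchSum P Q + matchSum Q R ≤ S.card + matchSum P R := by
  have hPsub : ∀ A ∈ P, A ⊆ S := fun A hA => hP.2.2 ▸ Finset.le_sup (f := id) hA
  have hQsub : ∀ B ∈ Q, B ⊆ S := fun B hB => hQ.2.2 ▸ Finset.le_sup (f := id) hB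
  choose b hbmem hbval using fun A => Q.exists_mem_eq_sup hQne (fun B => (A ∩ B).card)
  choose c hcmem hcval using fun B => R.exists_mem_eq_sup hRne (fun C => (B ∩ C).card)
  have hScard : ∑ A ∈ P, A.card = S.card := by
    rw [← sum_inter_card_of_partition hP (Finset.Subset.refl S)]
    exact Finset.sum_congr rfl fun A hA => by
      rw [Finset.inter_eq_right.mpr (hPsub A hA)]
  -- per-A key step
  have hstep : ∀ A ∈ P,
      (A ∩ b A).card + ∑ B ∈ Q, ((A ∩ B) ∩ c B).card
        ≤ A.card + (A ∩ c (b A)).card := by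
    intro A hA
    have h1 : (A ∩ b A).card
        = ∑ B ∈ Q, if B = b A then (A ∩ B).card else 0 := by
      rw [Finset.sum_ite_eq' Q (b A) (fun B => (A ∩ B).card), if_pos (hbmem A)]
    have h2 : A.card = ∑ B ∈ Q, (A ∩ B).card :=
      (sum_inter_card_of_partition hQ (hPsub A hA)).symm
    have h3 : ((A ∩ b A) ∩ c (b A)).card ≤ (A ∩ c (b A)).card := by
      apply Finset.card_le_card
      intro x hx
      simp only [Finset.mem_inter] at hx ⊢
      tauto
    calc (A ∩ b A).card + ∑ B ∈ Q, ((A ∩ B) ∩ c B).card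
        = ∑ B ∈ Q, ((if B = b A then (A ∩ B).card else 0)
            + ((A ∩ B) ∩ c B).card) := by
          rw [h1, ← Finset.sum_add_distrib]
      _ ≤ ∑ B ∈ Q, ((A ∩ B).card
            + if B = b A then ((A ∩ B) ∩ c B).card else 0) := by
          apply Finset.sum_le_sum
          intro B hB
          by_cases hBA : B = b A
          · simp [hBA]
          · simp only [if_neg hBA, zero_add, add_zero]
            exact Finset.card_le_card Finset.inter_subset_left
      _ = ∑ B ∈ Q, (A ∩ B).card + ((A ∩ b A) ∩ c (b A)).card := by
          rw [Finset.sum_add_distrib,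
            Finset.sum_ite_eq' Q (b A) (fun B => ((A ∩ B) ∩ c B).card),
            if_pos (hbmem A)]
      _ ≤ A.card + (A ∩ c (b A)).card := by
          rw [← h2]; exact Nat.add_le_add_left h3 _
  have hinter3 : ∀ (B : Finset α), ∀ A : Finset α,
      (B ∩ c B) ∩ A = (A ∩ B) ∩ c B := by
    intro B A
    ext x
    simp only [Finset.mem_inter]
    tauto
  calc matchSum P Q + matchSum Q R
      = ∑ A ∈ P, (A ∩ b A).card + ∑ B ∈ Q, (B ∩ c B).card := by
        unfold matchSum
        rw [Finset.sum_congr rfl fun A _ => hbval A,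
          Finset.sum_congr rfl fun B _ => hcval B]
    _ = ∑ A ∈ P, (A ∩ b A).card + ∑ A ∈ P, ∑ B ∈ Q, ((A ∩ B) ∩ c B).card := by
        congr 1
        rw [Finset.sum_comm]
        apply Finset.sum_congr rfl
        intro B hB
        rw [← sum_inter_card_of_partition hP
          (Finset.Subset.trans Finset.inter_subset_left (hQsub B hB))]
        exact Finset.sum_congr rfl fun A _ => by rw [hinter3]
    _ = ∑ A ∈ P, ((A ∩ b A).card + ∑ B ∈ Q, ((A ∩ B) ∩ c B).card) := by
        rw [Finset.sum_add_distrib]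
    _ ≤ ∑ A ∈ P, (A.card + (A ∩ c (b A)).card) := Finset.sum_le_sum hstep
    _ = S.card + ∑ A ∈ P, (A ∩ c (b A)).card := by
        rw [Finset.sum_add_distrib, hScard]
    _ ≤ S.card + matchSum P R := by
        apply Nat.add_le_add_left
        apply Finset.sum_le_sum
        intro A _
        exact Finset.le_sup (f := fun C => (A ∩ C).card) (hcmem (b A))

/-- `ε_n` satisfies the triangle inequality. -/
theorem epsN_triangle (S : Finset α) (n : ℕ) (hn : 1 ≤ n) (hS : S.card = n)
    (P Q R : Finset (Finset α)) (hP : IsPartitionOf S P) (hQ : IsPartitionOf S Q)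
    (hR : IsPartitionOf S R) :
    epsN n P R ≤ epsN n P Q + epsN n Q R := by
  have hSne : S.Nonempty := Finset.card_pos.mp (hS ▸ hn)
  have hne : ∀ {T : Finset (Finset α)}, IsPartitionOf S T → T.Nonempty := by
    intro T hT
    rcases Finset.eq_empty_or_nonempty T with h | h
    · exfalso
      have := hT.2.2
      rw [h, Finset.sup_empty] at this
      exact hSne.ne_empty this.symm
    · exact h
  have key1 := matchSum_triangle hP hQ hR (hne hQ) (hne hR)
  have key2 := matchSum_triangle hR hQ hP (hne hQ) (hne hP)
  rw [hS] at key1 key2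
  have k1 : ((matchSum P Q : ℝ) + matchSum Q R) ≤ n + matchSum P R := by
    exact_mod_cast key1
  have k2 : ((matchSum R Q : ℝ) + matchSum Q P) ≤ n + matchSum R P := by
    exact_mod_cast key2
  have hn0 : (0 : ℝ) < n := by exact_mod_cast hn
  have hinv : (0 : ℝ) ≤ (n : ℝ)⁻¹ := by positivity
  have hid : (n : ℝ)⁻¹ * n = 1 := inv_mul_cancel₀ hn0.ne'
  unfold epsN
  nlinarith [mul_le_mul_of_nonneg_left (add_le_add k1 k2) hinv]
end

section
/- Define ε₁(π₁,π₂) = 1 − n⁻¹ Σ_{j=1}^{k₁} max_{l∈{1,…,k₂}} |S₁ⱼ ∩ S₂ₗ| for partitions π₁ = {S₁ⱼ}ⱼ₌₁^{k₁}, π₂ = {S₂ₗ}ₗ₌₁^{k₂} of a finite set S of size n. If π̃ is the common refinement of π₁ and π₃ (two elements are in the same block of π̃ iff they are in the same block of both π₁ and π₃), then ε₁(π₁,π₂) ≥ ε₁(π̃,π₂) for any partition π₂. -/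
open Finset

variable {α : Type*} [DecidableEq α]

/-- The one-sided partition discrepancy `ε₁(π₁,π₂) = 1 − n⁻¹ Σⱼ maxₗ |S₁ⱼ ∩ S₂ₗ|`. -/
noncomputable def eps1 (n : ℕ) (P Q : Finset (Finset α)) : ℝ :=
  1 - (n : ℝ)⁻¹ * (matchSum P Q : ℝ)

/-- The common refinement `π₁ ∩ π₃`: all nonempty intersections of a block of `π₁`
with a block of `π₃`. -/
def commonRefinement (P R : Finset (Finset α)) : Finset (Finset α) :=
  ((P ×ˢ R).image fun pr => pr.1 ∩ pr.2).filter fun B => B.Nonempty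

/-- refining the first argument can only decrease `ε₁`. -/
theorem eps1_commonRefinement_le (S : Finset α) (n : ℕ) (hn : 1 ≤ n) (hS : S.card = n)
    (P Q R : Finset (Finset α)) (hP : IsPartitionOf S P) (hQ : IsPartitionOf S Q)
    (hR : IsPartitionOf S R) :
    eps1 n (commonRefinement P R) Q ≤ eps1 n P Q := by
  obtain ⟨hPne, hPdisj, hPsup⟩ := hP
  obtain ⟨hRne, hRdisj, hRsup⟩ := hR
  have hcard : ∀ A : Finset α, A ⊆ S → A.card = ∑ C ∈ R, (A ∩ C).card := by
    intro A hA
    have hrep : A = R.biUnion (fun C => A ∩ C) := by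
      ext x
      simp only [mem_biUnion, mem_inter]
      constructor
      · intro hx
        have hxS := hA hx
        rw [← hRsup] at hxS
        obtain ⟨C, hC, hxC⟩ := mem_sup.1 hxS
        exact ⟨C, hC, hx, hxC⟩
      · rintro ⟨C, _, hx, _⟩; exact hx
    calc A.card = (R.biUnion (fun C => A ∩ C)).card := by rw [← hrep]
      _ = ∑ C ∈ R, (A ∩ C).card := by
          refine card_biUnion ?_
          intro C hC C' hC' hne
          exact Disjoint.mono inter_subset_right inter_subset_right
            (hRdisj hC hC' hne)
  set f : Finset α → Finset (Finset α) :=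
    fun B => (R.image (fun C => B ∩ C)).filter (·.Nonempty) with hf
  have hT : commonRefinement P R = P.biUnion f := by
    ext X
    simp only [commonRefinement, hf, mem_filter, mem_image, mem_biUnion,
      Finset.mem_product, Prod.exists]
    constructor
    · rintro ⟨⟨B, C, ⟨hB, hC⟩, rfl⟩, hne⟩
      exact ⟨B, hB, ⟨⟨C, hC, rfl⟩, hne⟩⟩
    · rintro ⟨B, hB, ⟨⟨C, hC, rfl⟩, hne⟩⟩
      exact ⟨⟨B, C, ⟨hB, hC⟩, rfl⟩, hne⟩
  have hkey : matchSum P Q ≤ matchSum (commonRefinement P R) Q := by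
    rw [matchSum, matchSum, hT, Finset.sum_biUnion]
    · refine Finset.sum_le_sum ?_
      intro B hB
      refine Finset.sup_le ?_
      intro C' hC'
      have hBS : B ∩ C' ⊆ S := by
        refine subset_trans inter_subset_left ?_
        rw [← hPsup]
        exact le_sup (f := id) hB
      have h1 : (B ∩ C').card = ∑ C ∈ R, ((B ∩ C) ∩ C').card := by
        rw [hcard (B ∩ C') hBS]
        refine Finset.sum_congr rfl ?_
        intro C _
        rw [inter_right_comm]
      have h2 : ∑ C ∈ R, ((B ∩ C) ∩ C').card
          = ∑ C ∈ R.filter (fun C => (B ∩ C).Nonempty), ((B ∩ C) ∩ C').card := by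
        refine (Finset.sum_subset (filter_subset _ _) ?_).symm
        intro C hC hCn
        have : B ∩ C = ∅ := by
          by_contra h
          exact hCn (mem_filter.2 ⟨hC, nonempty_iff_ne_empty.2 h⟩)
        simp [this]
      have h3 : ∑ C ∈ R.filter (fun C => (B ∩ C).Nonempty), ((B ∩ C) ∩ C').card
          ≤ ∑ C ∈ R.filter (fun C => (B ∩ C).Nonempty),
              Q.sup (fun D => ((B ∩ C) ∩ D).card) := by
        refine Finset.sum_le_sum ?_
        intro C _
        exact le_sup (f := fun D => ((B ∩ C) ∩ D).card) hC'
      have h4 : ∑ C ∈ R.filter (fun C => (B ∩ C).Nonempty),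
            Q.sup (fun D => ((B ∩ C) ∩ D).card)
          = ∑ X ∈ f B, Q.sup (fun D => (X ∩ D).card) := by
        simp only [hf]
        have himg : (R.image (fun C => B ∩ C)).filter (·.Nonempty)
            = (R.filter (fun C => (B ∩ C).Nonempty)).image (fun C => B ∩ C) := by
          ext X
          simp only [mem_filter, mem_image]
          constructor
          · rintro ⟨⟨C, hC, rfl⟩, hne⟩
            exact ⟨C, ⟨hC, hne⟩, rfl⟩
          · rintro ⟨C, ⟨hC, hne⟩, rfl⟩
            exact ⟨⟨C, hC, rfl⟩, hne⟩
        rw [himg]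
        have hinj : ∀ C ∈ R.filter (fun C => (B ∩ C).Nonempty),
            ∀ C2 ∈ R.filter (fun C => (B ∩ C).Nonempty), B ∩ C = B ∩ C2 → C = C2 := by
          intro C hC C2 hC2 heq
          by_contra hne
          obtain ⟨hC, hCne⟩ := mem_filter.1 hC
          obtain ⟨hC2, _⟩ := mem_filter.1 hC2
          have hd := hRdisj hC hC2 hne
          obtain ⟨x, hx⟩ := hCne
          have hx2 : x ∈ B ∩ C2 := heq ▸ hx
          exact (Finset.disjoint_left.1 hd (mem_inter.1 hx).2 (mem_inter.1 hx2).2)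
        rw [Finset.sum_image hinj]
      calc (B ∩ C').card = _ := h1
        _ = _ := h2
        _ ≤ _ := h3
        _ = _ := h4
    · intro B hB B' hB' hne
      simp only [Function.onFun]
      rw [Finset.disjoint_left]
      intro X hX hX'
      simp only [hf, mem_filter, mem_image] at hX hX'
      obtain ⟨⟨C, _, rfl⟩, hXne⟩ := hX
      obtain ⟨⟨C', _, heq⟩, _⟩ := hX'
      obtain ⟨x, hx⟩ := hXne
      have hxB' : x ∈ B' := (mem_inter.1 (heq ▸ hx)).1
      exact Finset.disjoint_left.1 (hPdisj hB hB' hne) (mem_inter.1 hx).1 hxB'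
  unfold eps1
  have hn0 : (0 : ℝ) ≤ (n : ℝ)⁻¹ := by positivity
  have := mul_le_mul_of_nonneg_left (by exact_mod_cast hkey :
    (matchSum P Q : ℝ) ≤ (matchSum (commonRefinement P R) Q : ℝ)) hn0
  linarith
end

section
/- With ε₁ defined as ε₁(π₁,π₂) = 1 − n⁻¹ Σⱼ maxₗ |S₁ⱼ ∩ S₂ₗ|, and π̃ = π₁ ∩ π₃ the common refinement of partitions π₁ and π₃ of a finite set S of size n, the inequality ε₁(π₁,π₃) − ε₁(π̃,π₃) ≥ ε₁(π₁,π₂) − ε₁(π̃,π₂) holds for any partition π₂ of S. -/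
open Finset

variable {α : Type*} [DecidableEq α]

/-- Sum over an image is at most the sum of the composition (for ℕ-valued functions). -/
lemma sum_image_le_nat {β γ : Type*} [DecidableEq β] [DecidableEq γ] (s : Finset β) (f : β → γ) (g : γ → ℕ) :
    ∑ D ∈ s.image f, g D ≤ ∑ x ∈ s, g (f x) := by
  induction s using Finset.induction with
  | empty => simp
  | @insert a s h ih =>
    rw [Finset.image_insert, Finset.sum_insert h]
    by_cases hm : f a ∈ s.image f
    · rw [Finset.insert_eq_self.2 hm]
      exact le_trans ih (Nat.le_add_left _ _)
    · rw [Finset.sum_insert hm]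
      exact Nat.add_le_add_left ih _

/-- Sum of `|B ∩ C|` over a pairwise disjoint family equals `|B ∩ union|`. -/
lemma sum_inter_card (B : Finset α) (R : Finset (Finset α))
    (hdisj : (R : Set (Finset α)).PairwiseDisjoint id) :
    ∑ C ∈ R, (B ∩ C).card = (B ∩ R.sup id).card := by
  have h : B ∩ R.sup id = R.biUnion (fun C => B ∩ C) := by
    rw [Finset.sup_eq_biUnion]
    ext x; simp [Finset.mem_biUnion]; tauto
  rw [h, Finset.card_biUnion]
  intro x hx y hy hxy
  exact (hdisj hx hy hxy).mono Finset.inter_subset_right Finset.inter_subset_right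

/-- Blocks of a partition sum to the cardinality of the ground set. -/
lemma sum_card_partition (S : Finset α) (P : Finset (Finset α)) (hP : IsPartitionOf S P) :
    ∑ B ∈ P, B.card = S.card := by
  have h := sum_inter_card S P hP.2.1
  rw [hP.2.2, Finset.inter_self] at h
  rw [← h]
  apply Finset.sum_congr rfl
  intro B hB
  congr 1
  have hsub : B ⊆ S := by rw [← hP.2.2]; exact Finset.le_sup (f := id) hB
  exact (Finset.inter_eq_right.2 hsub).symm

/-- The common refinement of two partitions is a partition. -/
lemma commonRefinement_isPartition (S : Finset α) (P R : Finset (Finset α))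
    (hP : IsPartitionOf S P) (hR : IsPartitionOf S R) :
    IsPartitionOf S (commonRefinement P R) := by
  refine ⟨fun B hB => (Finset.mem_filter.1 hB).2, ?_, ?_⟩
  · intro D hD D' hD' hne
    simp only [commonRefinement, Finset.coe_filter, Set.mem_setOf_eq, Finset.mem_image,
      Finset.mem_product] at hD hD'
    obtain ⟨⟨⟨B, C⟩, ⟨hB, hC⟩, rfl⟩, -⟩ := hD
    obtain ⟨⟨⟨B', C'⟩, ⟨hB', hC'⟩, rfl⟩, -⟩ := hD'
    show Disjoint (id _) (id _)
    rw [id, id, Finset.disjoint_left]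
    intro x hx hx'
    simp only [id] at hx hx' ⊢
    have hx1 := Finset.mem_inter.1 hx
    have hx2 := Finset.mem_inter.1 hx'
    have hBB : B = B' := by
      by_contra hne'
      exact (Finset.disjoint_left.1 (hP.2.1 hB hB' hne')) hx1.1 hx2.1
    have hCC : C = C' := by
      by_contra hne'
      exact (Finset.disjoint_left.1 (hR.2.1 hC hC' hne')) hx1.2 hx2.2
    exact hne (by rw [hBB, hCC])
  · apply le_antisymm
    · apply Finset.sup_le
      intro D hD
      simp only [commonRefinement, Finset.mem_filter, Finset.mem_image,
        Finset.mem_product] at hD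
      obtain ⟨⟨⟨B, C⟩, ⟨hB, hC⟩, rfl⟩, -⟩ := hD
      have : B ⊆ S := by rw [← hP.2.2]; exact Finset.le_sup (f := id) hB
      exact le_trans Finset.inter_subset_left this
    · intro x hx
      have hxP : ∃ B ∈ P, x ∈ B := by
        rw [← hP.2.2] at hx
        simpa [Finset.mem_sup] using hx
      have hxR : ∃ C ∈ R, x ∈ C := by
        rw [← hR.2.2] at hx
        simpa [Finset.mem_sup] using hx
      obtain ⟨B, hB, hxB⟩ := hxP
      obtain ⟨C, hC, hxC⟩ := hxR
      have hmem : B ∩ C ∈ commonRefinement P R := by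
        simp only [commonRefinement, Finset.mem_filter, Finset.mem_image, Finset.mem_product]
        exact ⟨⟨(B, C), ⟨hB, hC⟩, rfl⟩, ⟨x, Finset.mem_inter.2 ⟨hxB, hxC⟩⟩⟩
      have : x ∈ (commonRefinement P R).sup id :=
        Finset.mem_sup.2 ⟨B ∩ C, hmem, Finset.mem_inter.2 ⟨hxB, hxC⟩⟩
      exact this

/-- The per-block inequality. -/
lemma per_block (S : Finset α) (B : Finset α) (hBS : B ⊆ S)
    (Q R : Finset (Finset α)) (hR : IsPartitionOf S R) (hRne : R.Nonempty) :
    (∑ C ∈ R, Q.sup (fun L => (B ∩ C ∩ L).card)) + R.sup (fun C => (B ∩ C).card)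
      ≤ Q.sup (fun L => (B ∩ L).card) + B.card := by
  obtain ⟨C₀, hC₀, hC₀eq⟩ := Finset.exists_mem_eq_sup R hRne (fun C => (B ∩ C).card)
  rw [hC₀eq]
  have hsplit : ∑ C ∈ R, Q.sup (fun L => (B ∩ C ∩ L).card)
      = Q.sup (fun L => (B ∩ C₀ ∩ L).card)
        + ∑ C ∈ R.erase C₀, Q.sup (fun L => (B ∩ C ∩ L).card) :=
    (Finset.add_sum_erase R (fun C => Q.sup (fun L => (B ∩ C ∩ L).card)) hC₀).symm
  rw [hsplit]
  have h1 : Q.sup (fun L => (B ∩ C₀ ∩ L).card) ≤ Q.sup (fun L => (B ∩ L).card) := by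
    apply Finset.sup_le
    intro L hL
    refine le_trans (Finset.card_le_card ?_) (Finset.le_sup (f := fun L => (B ∩ L).card) hL)
    intro x hx; simp only [Finset.mem_inter] at hx ⊢; tauto
  have h2 : ∑ C ∈ R.erase C₀, Q.sup (fun L => (B ∩ C ∩ L).card)
      ≤ ∑ C ∈ R.erase C₀, (B ∩ C).card := by
    apply Finset.sum_le_sum
    intro C hC
    exact Finset.sup_le fun L hL => Finset.card_le_card Finset.inter_subset_left
  have h3 : ∑ C ∈ R.erase C₀, (B ∩ C).card + (B ∩ C₀).card = B.card := by
    rw [Finset.sum_erase_add _ _ hC₀, sum_inter_card B R hR.2.1, hR.2.2,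
      Finset.inter_eq_left.2 hBS]
  omega

/-- `ε₁(π₁,π₃) − ε₁(π̃,π₃) ≥ ε₁(π₁,π₂) − ε₁(π̃,π₂)` where `π̃ = π₁ ∩ π₃`. -/
theorem eps1_refinement_gap (S : Finset α) (n : ℕ) (hn : 1 ≤ n) (hS : S.card = n)
    (P Q R : Finset (Finset α)) (hP : IsPartitionOf S P) (hQ : IsPartitionOf S Q)
    (hR : IsPartitionOf S R) :
    eps1 n P Q - eps1 n (commonRefinement P R) Q ≤
      eps1 n P R - eps1 n (commonRefinement P R) R := by
  set T := commonRefinement P R with hT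
  have hSne : S.Nonempty := Finset.card_pos.1 (hS ▸ hn)
  have hRne : R.Nonempty := by
    rcases Finset.eq_empty_or_nonempty R with h | h
    · exfalso
      have := hR.2.2
      rw [h] at this
      simp at this
      exact hSne.ne_empty this.symm
    · exact h
  have hTpart : IsPartitionOf S T := commonRefinement_isPartition S P R hP hR
  -- step A
  have stepA : matchSum T Q ≤ ∑ B ∈ P, ∑ C ∈ R, Q.sup (fun L => (B ∩ C ∩ L).card) := by
    have h1 : matchSum T Q ≤
        ∑ D ∈ (P ×ˢ R).image (fun pr => pr.1 ∩ pr.2), Q.sup (fun L => (D ∩ L).card) :=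
      Finset.sum_le_sum_of_subset (Finset.filter_subset _ _)
    have h2 := sum_image_le_nat (P ×ˢ R) (fun pr => pr.1 ∩ pr.2)
        (fun D => Q.sup (fun L => (D ∩ L).card))
    rw [Finset.sum_product] at h2
    exact le_trans h1 h2
  -- step B
  have stepB : matchSum T Q + matchSum P R ≤ matchSum P Q + n := by
    have hsum : (∑ B ∈ P, ∑ C ∈ R, Q.sup (fun L => (B ∩ C ∩ L).card)) + matchSum P R
        ≤ matchSum P Q + n := by
      unfold matchSum
      rw [← Finset.sum_add_distrib, ← hS, ← sum_card_partition S P hP,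
        ← Finset.sum_add_distrib]
      apply Finset.sum_le_sum
      intro B hB
      apply per_block S B ?_ Q R hR hRne
      rw [← hP.2.2]; exact Finset.le_sup (f := id) hB
    omega
  -- step C
  have stepC : n ≤ matchSum T R := by
    have h1 : ∑ D ∈ T, D.card ≤ matchSum T R := by
      apply Finset.sum_le_sum
      intro D hD
      simp only [hT, commonRefinement, Finset.mem_filter, Finset.mem_image,
        Finset.mem_product] at hD
      obtain ⟨⟨⟨B, C⟩, ⟨hB, hC⟩, rfl⟩, -⟩ := hD
      have : (B ∩ C).card = (B ∩ C ∩ C).card := by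
        rw [Finset.inter_assoc, Finset.inter_self]
      rw [this]
      exact Finset.le_sup (f := fun C' => (B ∩ C ∩ C').card) hC
    have h2 : ∑ D ∈ T, D.card = n := by rw [sum_card_partition S T hTpart, hS]
    omega
  -- conclude
  have hkey : matchSum T Q + matchSum P R ≤ matchSum P Q + matchSum T R := by omega
  have hcast : (matchSum T Q : ℝ) + (matchSum P R : ℝ)
      ≤ (matchSum P Q : ℝ) + (matchSum T R : ℝ) := by exact_mod_cast hkey
  have hinv : (0 : ℝ) ≤ (n : ℝ)⁻¹ := by positivity
  simp only [eps1]
  nlinarith [mul_le_mul_of_nonneg_left hcast hinv]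
end

section
/- The function ε₁(π₁,π₂) = 1 − n⁻¹ Σⱼ maxₗ |S₁ⱼ ∩ S₂ₗ| on partitions of a finite set S of size n satisfies the triangle inequality: ε₁(π₁,π₃) ≥ ε₁(π₁,π₂) − ε₁(π₃,π₂) for all partitions π₁, π₂, π₃ of S. -/
open Finset

variable {α : Type*} [DecidableEq α]

/-- Summing `|B ∩ D|` over the blocks `D` of a partition of `S` recovers `|B|`. -/
lemma sum_inter_card_s6 (S B : Finset α) (R : Finset (Finset α)) (hR : IsPartitionOf S R)
    (hB : B ⊆ S) : ∑ D ∈ R, (B ∩ D).card = B.card := by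
  obtain ⟨-, hdisj, hsup⟩ := hR
  have hbi : R.biUnion (fun D => B ∩ D) = B := by
    ext x
    simp only [Finset.mem_biUnion, Finset.mem_inter]
    constructor
    · rintro ⟨D, _, hx, _⟩; exact hx
    · intro hx
      have hxS : x ∈ S := hB hx
      rw [← hsup, Finset.sup_eq_biUnion, Finset.mem_biUnion] at hxS
      obtain ⟨D, hD, hxD⟩ := hxS
      exact ⟨D, hD, hx, hxD⟩
  have := Finset.card_biUnion (s := R) (t := fun D => B ∩ D) ?_
  · rw [hbi] at this; omega
  · intro x hx y hy hxy
    exact (hdisj hx hy hxy).mono inter_subset_right inter_subset_right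

lemma block_subset (S : Finset α) (R : Finset (Finset α)) (hR : IsPartitionOf S R)
    {D : Finset α} (hD : D ∈ R) : D ⊆ S := by
  rw [← hR.2.2]; exact Finset.le_sup (f := id) hD

lemma part_nonempty (S : Finset α) (hSne : S.Nonempty) (Q : Finset (Finset α))
    (hQ : IsPartitionOf S Q) : Q.Nonempty := by
  rw [Finset.nonempty_iff_ne_empty]
  rintro rfl
  have := hQ.2.2
  simp only [Finset.sup_empty] at this
  exact hSne.ne_empty ((Finset.bot_eq_empty ▸ this).symm)

lemma matchSum_key (S : Finset α) (hSne : S.Nonempty) (P Q R : Finset (Finset α))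
    (hP : IsPartitionOf S P) (hQ : IsPartitionOf S Q) (hR : IsPartitionOf S R) :
    matchSum R Q + matchSum P R ≤ S.card + matchSum P Q := by
  have hQne : Q.Nonempty := part_nonempty S hSne Q hQ
  have hRne : R.Nonempty := part_nonempty S hSne R hR
  choose C hCmem hCval using fun D : Finset α =>
    Finset.exists_mem_eq_sup Q hQne (fun Cq => (D ∩ Cq).card)
  choose Dm hDmem hDval using fun B : Finset α =>
    Finset.exists_mem_eq_sup R hRne (fun D => (B ∩ D).card)
  have hRQ : matchSum R Q = ∑ B ∈ P, ∑ D ∈ R, ((D ∩ C D) ∩ B).card := by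
    rw [matchSum, Finset.sum_comm]
    refine Finset.sum_congr rfl fun D hD => ?_
    rw [hCval D]
    exact (sum_inter_card_s6 S (D ∩ C D) P hP
      ((Finset.inter_subset_left).trans (block_subset S R hR hD))).symm
  have hPR : matchSum P R = ∑ B ∈ P, (B ∩ Dm B).card :=
    Finset.sum_congr rfl fun B _ => hDval B
  have hkey : ∀ B ∈ P, (∑ D ∈ R, ((D ∩ C D) ∩ B).card) + (B ∩ Dm B).card ≤
      Q.sup (fun Cq => (B ∩ Cq).card) + B.card := by
    intro B hB
    have hBS : B ⊆ S := block_subset S P hP hB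
    set t : Finset α → ℕ := fun D => ((D ∩ C D) ∩ B).card with ht
    have hsplit : ∑ D ∈ R, t D = (∑ D ∈ R.erase (Dm B), t D) + t (Dm B) :=
      (Finset.sum_erase_add R t (hDmem B)).symm
    have h1 : t (Dm B) ≤ Q.sup (fun Cq => (B ∩ Cq).card) := by
      refine le_trans ?_ (Finset.le_sup (f := fun Cq => (B ∩ Cq).card) (hCmem (Dm B)))
      exact Finset.card_le_card (by intro x; simp only [Finset.mem_inter]; tauto)
    have h2 : ∀ D ∈ R.erase (Dm B), t D ≤ (B ∩ D).card := by
      intro D _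
      exact Finset.card_le_card (by intro x; simp only [Finset.mem_inter]; tauto)
    have h3 : (∑ D ∈ R.erase (Dm B), (B ∩ D).card) + (B ∩ Dm B).card = B.card := by
      rw [Finset.sum_erase_add R _ (hDmem B)]
      exact sum_inter_card_s6 S B R hR hBS
    have h4 : ∑ D ∈ R.erase (Dm B), t D ≤ ∑ D ∈ R.erase (Dm B), (B ∩ D).card :=
      Finset.sum_le_sum h2
    rw [hsplit]
    omega
  calc matchSum R Q + matchSum P R
      = ∑ B ∈ P, ((∑ D ∈ R, ((D ∩ C D) ∩ B).card) + (B ∩ Dm B).card) := by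
        rw [hRQ, hPR, Finset.sum_add_distrib]
    _ ≤ ∑ B ∈ P, (Q.sup (fun Cq => (B ∩ Cq).card) + B.card) := Finset.sum_le_sum hkey
    _ = S.card + matchSum P Q := by
        rw [Finset.sum_add_distrib, sum_card_partition S P hP, matchSum, Nat.add_comm]

/-- triangle-type inequality for `ε₁`:
`ε₁(π₁,π₃) ≥ ε₁(π₁,π₂) − ε₁(π₃,π₂)`. -/
theorem eps1_triangle (S : Finset α) (n : ℕ) (hn : 1 ≤ n) (hS : S.card = n)
    (P Q R : Finset (Finset α)) (hP : IsPartitionOf S P) (hQ : IsPartitionOf S Q)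
    (hR : IsPartitionOf S R) :
    eps1 n P Q - eps1 n R Q ≤ eps1 n P R := by
  have hSne : S.Nonempty := Finset.card_pos.mp (by omega)
  have hkey := matchSum_key S hSne P Q R hP hQ hR
  rw [hS] at hkey
  have hn0 : (0:ℝ) < n := by exact_mod_cast Nat.lt_of_lt_of_le Nat.zero_lt_one hn
  have hcast : (matchSum R Q : ℝ) + (matchSum P R : ℝ) ≤ (n : ℝ) + (matchSum P Q : ℝ) := by
    exact_mod_cast hkey
  have hmul := mul_le_mul_of_nonneg_left hcast (inv_nonneg.mpr hn0.le)
  rw [mul_add, mul_add, inv_mul_cancel₀ hn0.ne'] at hmul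
  simp only [eps1]
  linarith
end

section
/- Let X₁,…,Xₙ be independent mean-zero real random variables satisfying Cramér's condition: there exists c > 0 such that E|Xᵢ|^k ≤ c^{k−2}·k!·E[Xᵢ²] < ∞ for all i and all k ≥ 3. Then for Sₙ = Σᵢ Xᵢ and any t > 0, P(|Sₙ| ≥ t) ≤ 2·exp(−t² / (4·Σᵢ E[Xᵢ²] + 2ct)). -/
/-! Pointwise, `exp u ≤ 1 + u + (exp |u| - 1 - |u|)`, and the last term is the tail
`∑_{k ≥ 2} |u|^k / k!` of the exponential series. Integrating it termwise for `u = l Xᵢ` and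
bounding `E|Xᵢ|^k` by Cramér's condition turns the tail into a geometric series, so for
`|l| c < 1` the mean-zero `Xᵢ` satisfy
`E exp (l Xᵢ) ≤ exp (l² σᵢ² / 2 · (1 + |l| c) / (1 - |l| c))` with `σᵢ² = E Xᵢ²`.
By independence these bounds multiply, and the Chernoff bound for both tails of `Sₙ` at
`l = t / (2 (σ² + c t))`, `σ² = ∑ σᵢ²`, gives the claim. -/

open MeasureTheory ProbabilityTheory Real

namespace MeasureTheory

variable {α ι E : Type*} [MeasurableSpace α] {μ : Measure α} [Countable ι]
  [NormedAddCommGroup E]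

theorem integrable_of_hasSum_of_summable_integral_norm {F : ι → α → E} {f : α → E}
    (hf : AEStronglyMeasurable f μ) (hF_int : ∀ i, Integrable (F i) μ)
    (hF_sum : Summable fun i ↦ ∫ a, ‖F i a‖ ∂μ) (hF_f : ∀ a, HasSum (F · a) (f a)) :
    Integrable f μ := by
  refine ⟨hf, ?_⟩
  calc ∫⁻ a, ‖f a‖ₑ ∂μ ≤ ∫⁻ a, ∑' i, ‖F i a‖ₑ ∂μ :=
        lintegral_mono fun a ↦ (hF_f a).tsum_eq ▸ enorm_tsum_le_tsum_enorm
    _ = ∑' i, ∫⁻ a, ‖F i a‖ₑ ∂μ := lintegral_tsum fun i ↦ (hF_int i).1.enorm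
    _ = ∑' i, ENNReal.ofReal (∫ a, ‖F i a‖ ∂μ) := by
        simp_rw [ofReal_integral_norm_eq_lintegral_enorm (hF_int _)]
    _ = ENNReal.ofReal (∑' i, ∫ a, ‖F i a‖ ∂μ) :=
        (ENNReal.ofReal_tsum_of_nonneg (fun i ↦ integral_nonneg fun a ↦ norm_nonneg _)
          hF_sum).symm
    _ < ⊤ := ENNReal.ofReal_lt_top

end MeasureTheory

namespace Real

theorem exp_sub_one_sub_le_exp_abs_sub_one_sub (u : ℝ) : exp u - 1 - u ≤ exp |u| - 1 - |u| := by
  rcases le_or_gt 0 u with hu | hu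
  · rw [abs_of_nonneg hu]
  · have h := sinh_le_self_iff.mpr hu.le
    rw [sinh_eq] at h
    rw [abs_of_neg hu]
    linarith

theorem hasSum_pow_add_two_div_factorial (x : ℝ) :
    HasSum (fun k : ℕ ↦ x ^ (k + 2) / (k + 2).factorial) (exp x - 1 - x) := by
  have h := NormedSpace.expSeries_div_hasSum_exp x
  rw [← exp_eq_exp_ℝ, ← hasSum_nat_add_iff' 2] at h
  simpa [Finset.sum_range_succ, sub_sub] using h

end Real

theorem hasSum_mul_geometric_sub_half_head {r : ℝ} (hr : |r| < 1) (s : ℝ) :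
    HasSum (fun k : ℕ ↦ s * r ^ k - if k = 0 then s / 2 else 0)
      (s / 2 * ((1 + r) / (1 - r))) := by
  have h := ((hasSum_geometric_of_abs_lt_one hr).mul_left s).sub (hasSum_ite_eq 0 (s / 2))
  have hK : s * (1 - r)⁻¹ - s / 2 = s / 2 * ((1 + r) / (1 - r)) := by
    field_simp [(sub_pos.mpr (abs_lt.mp hr).2).ne']
    ring
  rwa [hK] at h

namespace ProbabilityTheory

variable {Ω : Type*} [MeasurableSpace Ω] {μ : Measure Ω}

def CramerCondition (μ : Measure Ω) (Y : Ω → ℝ) (c : ℝ) : Prop :=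
  ∀ k : ℕ, 3 ≤ k →
    μ[fun ω ↦ |Y ω| ^ k] ≤ c ^ (k - 2) * (k.factorial : ℝ) * μ[fun ω ↦ Y ω ^ 2]

section Cramer

variable {Y : Ω → ℝ} {c a l : ℝ}

theorem CramerCondition.integral_pow_add_two_div_factorial_le (hY : CramerCondition μ Y c)
    (ha : 0 ≤ a) (k : ℕ) :
    ∫ ω, (a * |Y ω|) ^ (k + 2) / (k + 2).factorial ∂μ ≤
      a ^ 2 * μ[fun ω ↦ Y ω ^ 2] * (a * c) ^ k -
        if k = 0 then a ^ 2 * μ[fun ω ↦ Y ω ^ 2] / 2 else 0 := by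
  simp_rw [mul_pow, mul_div_assoc]
  rw [integral_const_mul, integral_div]
  rcases k with _ | k
  · refine le_of_eq ?_
    simp_rw [zero_add, sq_abs]
    norm_num [Nat.factorial]
    ring
  · have h := hY (k + 3) (by omega)
    rw [show k + 3 - 2 = k + 1 by omega] at h
    rw [if_neg k.succ_ne_zero, sub_zero]
    calc a ^ (k + 1 + 2) * (μ[fun ω ↦ |Y ω| ^ (k + 1 + 2)] / (k + 1 + 2).factorial)
        ≤ a ^ (k + 3) * (c ^ (k + 1) * ((k + 3).factorial : ℝ) * μ[fun ω ↦ Y ω ^ 2] /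
            (k + 3).factorial) := by gcongr
      _ = _ := by field_simp; ring

theorem CramerCondition.integrable_exp_tail_and_integral_le (hY : CramerCondition μ Y c)
    (hint : ∀ k : ℕ, Integrable (fun ω ↦ |Y ω| ^ k) μ) (ha : 0 ≤ a) (hc : 0 ≤ c)
    (hac : a * c < 1) :
    Integrable (fun ω ↦ exp (a * |Y ω|) - 1 - a * |Y ω|) μ ∧
      ∫ ω, exp (a * |Y ω|) - 1 - a * |Y ω| ∂μ ≤
        a ^ 2 * μ[fun ω ↦ Y ω ^ 2] / 2 * ((1 + a * c) / (1 - a * c)) := by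
  set F : ℕ → Ω → ℝ := fun k ω ↦ (a * |Y ω|) ^ (k + 2) / (k + 2).factorial
  have hF_f (ω : Ω) := hasSum_pow_add_two_div_factorial (a * |Y ω|)
  have hF_int (k : ℕ) : Integrable (F k) μ := by
    simpa only [F, mul_pow, mul_div_assoc] using
      ((hint (k + 2)).div_const ((k + 2).factorial : ℝ)).const_mul (a ^ (k + 2))
  have hF_norm (k : ℕ) : ∫ ω, ‖F k ω‖ ∂μ = ∫ ω, F k ω ∂μ :=
    integral_congr_ae <| .of_forall fun ω ↦ Real.norm_of_nonneg (by positivity)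
  have hmaj := hasSum_mul_geometric_sub_half_head
    ((abs_of_nonneg (mul_nonneg ha hc)).trans_lt hac) (a ^ 2 * μ[fun ω ↦ Y ω ^ 2])
  have hle := hY.integral_pow_add_two_div_factorial_le ha
  have hF_sum : Summable fun k ↦ ∫ ω, ‖F k ω‖ ∂μ := by
    simp_rw [hF_norm]
    exact hmaj.summable.of_nonneg_of_le
      (fun k ↦ integral_nonneg fun ω ↦ by positivity) hle
  have hYabs : AEStronglyMeasurable (fun ω ↦ |Y ω|) μ := by simpa using (hint 1).1
  have hmeas : AEStronglyMeasurable (fun ω ↦ exp (a * |Y ω|) - 1 - a * |Y ω|) μ :=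
    (by fun_prop : Continuous fun x ↦ exp (a * x) - 1 - a * x).comp_aestronglyMeasurable hYabs
  refine ⟨integrable_of_hasSum_of_summable_integral_norm hmeas hF_int hF_sum hF_f, ?_⟩
  have h := hasSum_integral_of_summable_integral_norm hF_int hF_sum
  rw [integral_congr_ae (.of_forall fun ω ↦ (hF_f ω).tsum_eq)] at h
  exact hasSum_le hle h hmaj

theorem CramerCondition.integrable_exp_mul_and_mgf_le [IsProbabilityMeasure μ]
    (hY : CramerCondition μ Y c) (hYm : AEMeasurable Y μ)
    (hint : ∀ k : ℕ, Integrable (fun ω ↦ |Y ω| ^ k) μ) (hmean : μ[Y] = 0) (hc : 0 ≤ c)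
    (hl : |l| = a) (hac : a * c < 1) :
    Integrable (fun ω ↦ exp (l * Y ω)) μ ∧
      mgf Y μ l ≤ exp (a ^ 2 * μ[fun ω ↦ Y ω ^ 2] / 2 * ((1 + a * c) / (1 - a * c))) := by
  obtain ⟨hT_int, hT_le⟩ :=
    hY.integrable_exp_tail_and_integral_le hint (hl ▸ abs_nonneg l) hc hac
  have hYint : Integrable Y μ :=
    (integrable_norm_iff hYm.aestronglyMeasurable).mp (by simpa using hint 1)
  have hlin : Integrable (fun ω ↦ 1 + l * Y ω) μ :=
    (integrable_const 1).add (hYint.const_mul l)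
  have hdom : Integrable (fun ω ↦ 1 + l * Y ω + (exp (a * |Y ω|) - 1 - a * |Y ω|)) μ :=
    hlin.add hT_int
  have hpt (ω : Ω) : exp (l * Y ω) ≤ 1 + l * Y ω + (exp (a * |Y ω|) - 1 - a * |Y ω|) := by
    have h := exp_sub_one_sub_le_exp_abs_sub_one_sub (l * Y ω)
    rw [abs_mul, hl] at h
    linarith
  have hexp_int : Integrable (fun ω ↦ exp (l * Y ω)) μ :=
    hdom.mono' (hYm.const_mul l).exp.aestronglyMeasurable
      (.of_forall fun ω ↦ by rw [norm_of_nonneg (exp_pos _).le]; exact hpt ω)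
  refine ⟨hexp_int, ?_⟩
  calc mgf Y μ l
      ≤ ∫ ω, 1 + l * Y ω + (exp (a * |Y ω|) - 1 - a * |Y ω|) ∂μ :=
        integral_mono hexp_int hdom hpt
    _ = 1 + ∫ ω, exp (a * |Y ω|) - 1 - a * |Y ω| ∂μ := by
        rw [integral_add hlin hT_int,
          integral_add (integrable_const 1) (hYint.const_mul l), integral_const_mul, hmean]
        simp
    _ ≤ 1 + a ^ 2 * μ[fun ω ↦ Y ω ^ 2] / 2 * ((1 + a * c) / (1 - a * c)) := by gcongr
    _ ≤ _ := by rw [add_comm]; exact add_one_le_exp _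

theorem iIndepFun.mgf_sum_le_of_cramerCondition [IsProbabilityMeasure μ] {ι : Type*} [Fintype ι]
    {X : ι → Ω → ℝ} (hindep : iIndepFun X μ) (hmeas : ∀ i, Measurable (X i))
    (hint : ∀ i (k : ℕ), Integrable (fun ω ↦ |X i ω| ^ k) μ) (hmean : ∀ i, μ[X i] = 0)
    (hX : ∀ i, CramerCondition μ (X i) c) (hc : 0 ≤ c) (hl : |l| = a) (hac : a * c < 1) :
    Integrable (fun ω ↦ exp (l * (∑ i, X i) ω)) μ ∧
      mgf (∑ i, X i) μ l ≤
        exp (a ^ 2 * (∑ i, μ[fun ω ↦ X i ω ^ 2]) / 2 * ((1 + a * c) / (1 - a * c))) := by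
  have h i :=
    (hX i).integrable_exp_mul_and_mgf_le (hmeas i).aemeasurable (hint i) (hmean i) hc hl hac
  refine ⟨hindep.integrable_exp_mul_sum hmeas fun i _ ↦ (h i).1, ?_⟩
  rw [hindep.mgf_sum hmeas, Finset.mul_sum, Finset.sum_div, Finset.sum_mul, exp_sum]
  exact Finset.prod_le_prod (fun i _ ↦ mgf_nonneg) fun i _ ↦ (h i).2

end Cramer

theorem measureReal_abs_ge_le_of_mgf_le [IsFiniteMeasure μ] {X : Ω → ℝ} {l v : ℝ} (t : ℝ)
    (hl : 0 ≤ l) (hint_pos : Integrable (fun ω ↦ exp (l * X ω)) μ)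
    (hint_neg : Integrable (fun ω ↦ exp (-l * X ω)) μ)
    (hpos : mgf X μ l ≤ exp v) (hneg : mgf X μ (-l) ≤ exp v) :
    μ.real {ω | t ≤ |X ω|} ≤ 2 * exp (-l * t + v) := by
  have hsub : {ω | t ≤ |X ω|} ⊆ {ω | t ≤ X ω} ∪ {ω | X ω ≤ -t} :=
    fun ω (hω : t ≤ |X ω|) ↦ by
      rcases le_abs.mp hω with h | h
      exacts [Or.inl h, Or.inr (le_neg_of_le_neg h)]
  have hup := (measure_ge_le_exp_mul_mgf t hl hint_pos).trans
    (mul_le_mul_of_nonneg_left hpos (exp_pos _).le)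
  have hdown := (measure_le_le_exp_mul_mgf (-t) (neg_nonpos.mpr hl) hint_neg).trans
    (mul_le_mul_of_nonneg_left hneg (exp_pos _).le)
  calc μ.real {ω | t ≤ |X ω|}
      ≤ μ.real {ω | t ≤ X ω} + μ.real {ω | X ω ≤ -t} :=
        (measureReal_mono hsub).trans (measureReal_union_le _ _)
    _ ≤ exp (-l * t) * exp v + exp (-(-l) * -t) * exp v := add_le_add hup hdown
    _ = 2 * exp (-l * t + v) := by rw [exp_add, neg_mul_neg, neg_mul]; ring

end ProbabilityTheory

-- Unlike the usual `t / (2σ + ct)`, this `l` keeps `l * c < 1` also when `σ = 0`.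
theorem bernstein_exponent_le {σ c t l : ℝ} (hσ : 0 ≤ σ) (hc : 0 < c) (ht : 0 < t)
    (hl : l = t / (2 * (σ + c * t))) :
    -l * t + l ^ 2 * σ / 2 * ((1 + l * c) / (1 - l * c)) ≤ -t ^ 2 / (4 * σ + 2 * c * t) := by
  have hE : 0 < σ + c * t := by positivity
  have h1 : 1 - l * c = (2 * σ + c * t) / (2 * (σ + c * t)) := by
    rw [hl]; field_simp; ring
  have hgap : -l * t + l ^ 2 * σ / 2 * ((1 + l * c) / (1 - l * c)) =
      -t ^ 2 / (4 * σ + 2 * c * t) - σ * t ^ 2 / (8 * (σ + c * t) ^ 2) := by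
    have : 0 < 2 * σ + c * t := by positivity
    rw [h1, hl]
    field_simp
    ring
  rw [hgap]
  linarith [show 0 ≤ σ * t ^ 2 / (8 * (σ + c * t) ^ 2) by positivity]

/-- Bernstein's inequality. If `X₁,…,Xₙ` are independent mean-zero
real random variables satisfying Cramér's condition
`E|Xᵢ|^k ≤ c^{k−2} k! E[Xᵢ²] < ∞` for all `k ≥ 3`, then for `Sₙ = Σᵢ Xᵢ` and any
`t > 0`, `P(|Sₙ| ≥ t) ≤ 2 exp(−t² / (4 Σᵢ E[Xᵢ²] + 2 c t))`. -/
theorem bernstein_inequality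
    {Ω : Type*} [MeasurableSpace Ω] (μ : Measure Ω) [IsProbabilityMeasure μ]
    {n : ℕ} (X : Fin n → Ω → ℝ) (hmeas : ∀ i, Measurable (X i))
    (hindep : iIndepFun X μ)
    (hint : ∀ i (k : ℕ), Integrable (fun ω => |X i ω| ^ k) μ)
    (hmean : ∀ i, μ[X i] = 0)
    (c : ℝ) (hc : 0 < c)
    (hcramer : ∀ i, ∀ k : ℕ, 3 ≤ k →
      μ[fun ω => |X i ω| ^ k] ≤
        c ^ (k - 2) * (Nat.factorial k : ℝ) * μ[fun ω => (X i ω) ^ 2])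
    (t : ℝ) (ht : 0 < t) :
    μ {ω | t ≤ |∑ i, X i ω|} ≤
      ENNReal.ofReal (2 * Real.exp
        (-(t ^ 2) / (4 * (∑ i, μ[fun ω => (X i ω) ^ 2]) + 2 * c * t))) := by
  set σ := ∑ i, μ[fun ω => (X i ω) ^ 2]
  have hσ : 0 ≤ σ := Finset.sum_nonneg fun i _ ↦ integral_nonneg fun ω ↦ sq_nonneg _
  set l := t / (2 * (σ + c * t)) with hl
  have hl₀ : 0 ≤ l := by positivity
  have hlc : l * c < 1 := by
    rw [hl, div_mul_eq_mul_div, div_lt_one (by positivity)]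
    nlinarith
  obtain ⟨hint_pos, hmgf_pos⟩ := hindep.mgf_sum_le_of_cramerCondition hmeas hint hmean hcramer
    hc.le (abs_of_nonneg hl₀) hlc
  obtain ⟨hint_neg, hmgf_neg⟩ := hindep.mgf_sum_le_of_cramerCondition hmeas hint hmean hcramer
    hc.le ((abs_neg l).trans (abs_of_nonneg hl₀)) hlc
  have htail := measureReal_abs_ge_le_of_mgf_le t hl₀ hint_pos hint_neg hmgf_pos hmgf_neg
  simp only [Finset.sum_apply] at htail
  rw [← ofReal_measureReal]
  refine ENNReal.ofReal_le_ofReal (htail.trans ?_)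
  gcongr
  exact bernstein_exponent_le hσ hc ht hl
end
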